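/- Let H : ℝ → ℝ be continuous and coercive and F0 : ℝ → ℝ be continuous, non-increasing and semi-coercive. Then at every point p with F0(p) = H(p) one has (R̲F0)(p) = (R̄F0)(p) = F0(p), so the relaxation ℜF0 is well-defined; moreover ℜF0 is continuous, non-increasing and semi-coercive, and ℜF0 = R̄(R̲F0) = R̲(R̄F0). -/

import Mathlib

open Set Filter

attribute [local instance] Classical.propDecidable

noncomputable section

/-- `H` is coercive: `H p → +∞` as `|p| → +∞`. -/
def Coercive (H : ℝ → ℝ) : Prop := Tendsto H (cocompact ℝ) atTop

/-- `F` is semi-coercive: `F p → +∞` as `p → -∞`. -/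
def SemiCoercive (F : ℝ → ℝ) : Prop := Tendsto F atBot atTop

/-- Sub-relaxation: `(R̲F)(p) = sup_{q ≥ p} min (F q) (H q)`. -/
def subR (H F : ℝ → ℝ) (p : ℝ) : ℝ := sSup ((fun q => min (F q) (H q)) '' Ici p)

/-- Super-relaxation: `(R̄F)(p) = inf_{q ≤ p} max (F q) (H q)`. -/
def supR (H F : ℝ → ℝ) (p : ℝ) : ℝ := sInf ((fun q => max (F q) (H q)) '' Iic p)

/-- Relaxation operator: `R̲F` where `F ≥ H`, `R̄F` where `F ≤ H`. -/
def relax (H F : ℝ → ℝ) (p : ℝ) : ℝ := if H p ≤ F p then subR H F p else supR H F p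

/-- `p` is a negative characteristic point of `F` relative to `H`. -/
def negChar (H F : ℝ → ℝ) (p : ℝ) : Prop :=
  H p = F p ∧ ∃ ε > 0, ∀ q ∈ Ioo (p - ε) p, H q < H p

/-- `p` is a positive characteristic point of `F` relative to `H`. -/
def posChar (H F : ℝ → ℝ) (p : ℝ) : Prop :=
  H p = F p ∧ ∃ ε > 0, ∀ q ∈ Ioo p (p + ε), H p < H q

/-- The upper point `p⁺ ∈ ℝ ∪ {+∞}` associated with `p` and `H`. -/
def upperPt (H : ℝ → ℝ) (p : ℝ) : EReal :=
  if ∀ ε > 0, ∃ q, p < q ∧ q < p + ε ∧ H q ≤ H p then (p : EReal)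
  else sSup ((fun q : ℝ => (q : EReal)) '' {q : ℝ | p < q ∧ ∀ r ∈ Ioo p q, H p < H r})

/-- The lower point `p⁻` associated with `p` and `H`. -/
def lowerPt (H : ℝ → ℝ) (p : ℝ) : ℝ :=
  if ∀ ε > 0, ∃ q, p - ε < q ∧ q < p ∧ H p ≤ H q then p
  else sInf {q : ℝ | q < p ∧ ∀ r ∈ Ioo q p, H r < H p}

/-- `p` is a positive limiter point of `F`. -/
def posLimiter (H F : ℝ → ℝ) (p : ℝ) : Prop :=
  (p : EReal) < upperPt H p ∧ F p ≤ H p ∧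
    ∀ q : ℝ, H q < H p → F q ≤ H q →
      {r : ℝ | lowerPt H q < r ∧ (r : EReal) < upperPt H q} ∩
        {r : ℝ | p < r ∧ (r : EReal) < upperPt H p} = ∅

/-- `p` is a negative limiter point of `F`. -/
def negLimiter (H F : ℝ → ℝ) (p : ℝ) : Prop :=
  lowerPt H p < p ∧ H p ≤ F p ∧
    ∀ q : ℝ, H q ≤ F q → H p < H q →
      {r : ℝ | lowerPt H q < r ∧ (r : EReal) < upperPt H q} ∩ Ioo (lowerPt H p) p = ∅

/-- The Godunov flux associated with `H`. -/
def godunov (H : ℝ → ℝ) (q p : ℝ) : ℝ :=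
  if p ≤ q then sSup (H '' Icc p q) else sInf (H '' Icc q p)

/-- The lower (set-valued) Godunov semi-flux `G̲(q,p)`, as a subset of the extended reals. -/
def subG (H : ℝ → ℝ) (q p : ℝ) : Set EReal :=
  if q < p then {⊥}
  else if q = p then Iic ((H p : ℝ) : EReal)
  else {((godunov H q p : ℝ) : EReal)}

/-- The upper (set-valued) Godunov semi-flux `Ḡ(q,p)`, as a subset of the extended reals. -/
def supG (H : ℝ → ℝ) (q p : ℝ) : Set EReal :=
  if q < p then {((godunov H q p : ℝ) : EReal)}
  else if q = p then Ici ((H p : ℝ) : EReal)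
  else {⊤}

/-! Where `F ≥ H` at `p` and `F ≤ H` at a later point `q`, the intermediate value theorem gives
a crossing `r ∈ [p, q]` with `F r = H r`, whence `(R̄F)(q) ≤ F r = H r ≤ (R̲F)(p)`. With this
comparison both compositions `R̄(R̲F)` and `R̲(R̄F)` reduce, case by case on the sign of `F - H`,
to `R̲F` or `R̄F`, i.e. to `ℜF`. Continuity then holds because running suprema and infima of
continuous functions are continuous, and semi-coercivity from the bound
`(ℜF)(p) ≥ inf_{q ≤ p} H q`, valid in either case. -/

section RunningExtremum

variable {g : ℝ → ℝ}

theorem abs_sSup_image_Ici_sub_le {p p' ε : ℝ} (hb : BddAbove (g '' Ici p)) (hpp' : p ≤ p')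
    (h : ∀ q ∈ Icc p p', g q ≤ g p' + ε) :
    |sSup (g '' Ici p) - sSup (g '' Ici p')| ≤ ε := by
  have hsub : g '' Ici p' ⊆ g '' Ici p := image_mono (Ici_subset_Ici.2 hpp')
  have hp' : g p' ≤ sSup (g '' Ici p') :=
    le_csSup (hb.mono hsub) (mem_image_of_mem g self_mem_Ici)
  have hle : sSup (g '' Ici p') ≤ sSup (g '' Ici p) :=
    csSup_le_csSup hb (nonempty_Ici.image g) hsub
  have hge : sSup (g '' Ici p) ≤ sSup (g '' Ici p') + ε := by
    refine csSup_le (nonempty_Ici.image g) ?_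
    rintro _ ⟨q, hq, rfl⟩
    rcases le_total q p' with hqp' | hp'q
    · linarith [h q ⟨hq, hqp'⟩]
    · linarith [h p' ⟨hpp', le_rfl⟩, le_csSup (hb.mono hsub) (mem_image_of_mem g hp'q)]
  rw [abs_le]
  constructor <;> linarith

theorem continuous_sSup_image_Ici (hg : Continuous g) (hb : ∀ p, BddAbove (g '' Ici p)) :
    Continuous fun p => sSup (g '' Ici p) := by
  refine Metric.continuous_iff.2 fun p₀ ε hε => ?_
  obtain ⟨δ, hδ, hgδ⟩ := Metric.continuous_iff.1 hg p₀ (ε / 4) (by positivity)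
  simp only [Real.dist_eq] at hgδ ⊢
  have hclose : ∀ a b, |a - p₀| < δ → |b - p₀| < δ → a ≤ b →
      |sSup (g '' Ici a) - sSup (g '' Ici b)| ≤ ε / 2 := by
    intro a b ha hb' hab
    refine abs_sSup_image_Ici_sub_le (hb a) hab fun q hq => ?_
    have hq₀ : |q - p₀| < δ := by
      rw [abs_lt] at ha hb' ⊢
      constructor <;> linarith [hq.1, hq.2]
    linarith [(abs_lt.1 (hgδ q hq₀)).2, (abs_lt.1 (hgδ b hb')).1]
  refine ⟨δ, hδ, fun p hp => (?_ : _ ≤ ε / 2).trans_lt (half_lt_self hε)⟩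
  have h₀ : |p₀ - p₀| < δ := by simpa using hδ
  rcases le_total p p₀ with hpp₀ | hp₀p
  · exact hclose p p₀ hp h₀ hpp₀
  · rw [abs_sub_comm]
    exact hclose p₀ p h₀ hp hp₀p

theorem continuous_sInf_image_Iic (hg : Continuous g) (hb : ∀ p, BddBelow (g '' Iic p)) :
    Continuous fun p => sInf (g '' Iic p) := by
  have hneg : ∀ p, -(g '' Iic p) = (fun q => -g (-q)) '' Ici (-p) := fun p => by
    rw [← image_neg_eq_neg, ← image_neg_Iic, image_image, image_image]
    simp only [neg_neg]
  simp only [Real.sInf_def, hneg]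
  refine (continuous_sSup_image_Ici (by fun_prop) fun p => ?_).comp continuous_neg |>.neg
  rw [← neg_neg p, ← hneg, bddAbove_neg]
  exact hb (-p)

end RunningExtremum

section Relaxation

variable {H F G : ℝ → ℝ} {p q : ℝ}

theorem bddAbove_subR_image (hF : Antitone F) (p : ℝ) :
    BddAbove ((fun q => min (F q) (H q)) '' Ici p) :=
  ⟨F p, by rintro _ ⟨q, hq, rfl⟩; exact (min_le_left _ _).trans (hF hq)⟩

theorem bddBelow_supR_image (hF : Antitone F) (p : ℝ) :
    BddBelow ((fun q => max (F q) (H q)) '' Iic p) :=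
  ⟨F p, by rintro _ ⟨q, hq, rfl⟩; exact (hF hq).trans (le_max_left _ _)⟩

theorem min_le_subR (hF : Antitone F) (hpq : p ≤ q) : min (F q) (H q) ≤ subR H F p :=
  le_csSup (bddAbove_subR_image hF p) (mem_image_of_mem _ hpq)

theorem supR_le_max (hF : Antitone F) (hqp : q ≤ p) : supR H F p ≤ max (F q) (H q) :=
  csInf_le (bddBelow_supR_image hF p) (mem_image_of_mem _ hqp)

theorem subR_le_of_forall {c : ℝ} (h : ∀ q, p ≤ q → min (F q) (H q) ≤ c) :
    subR H F p ≤ c :=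
  csSup_le (nonempty_Ici.image _) (by rintro _ ⟨q, hq, rfl⟩; exact h q hq)

theorem le_supR_of_forall {c : ℝ} (h : ∀ q, q ≤ p → c ≤ max (F q) (H q)) :
    c ≤ supR H F p :=
  le_csInf (nonempty_Iic.image _) (by rintro _ ⟨q, hq, rfl⟩; exact h q hq)

theorem subR_le (hF : Antitone F) (p : ℝ) : subR H F p ≤ F p :=
  subR_le_of_forall fun _ hq => (min_le_left _ _).trans (hF hq)

theorem le_supR (hF : Antitone F) (p : ℝ) : F p ≤ supR H F p :=
  le_supR_of_forall fun _ hq => (hF hq).trans (le_max_left _ _)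

theorem subR_antitone (hF : Antitone F) : Antitone (subR H F) := fun _ _ hpp' =>
  subR_le_of_forall fun _ hq => min_le_subR hF (hpp'.trans hq)

theorem supR_antitone (hF : Antitone F) : Antitone (supR H F) := fun _ _ hpp' =>
  le_supR_of_forall fun _ hq => supR_le_max hF (hq.trans hpp')

theorem subR_mono (hG : Antitone G) (hFG : F ≤ G) (p : ℝ) : subR H F p ≤ subR H G p :=
  subR_le_of_forall fun _ hq => (min_le_min_right _ (hFG _)).trans (min_le_subR hG hq)

theorem supR_mono (hF : Antitone F) (hFG : F ≤ G) (p : ℝ) : supR H F p ≤ supR H G p :=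
  le_supR_of_forall fun _ hq => (supR_le_max hF hq).trans (max_le_max_right _ (hFG _))

theorem subR_eq_self (hF : Antitone F) (h : F p ≤ H p) : subR H F p = F p :=
  (subR_le hF p).antisymm ((min_eq_left h).symm.trans_le (min_le_subR hF le_rfl))

theorem supR_eq_self (hF : Antitone F) (h : H p ≤ F p) : supR H F p = F p :=
  (supR_le_max (H := H) hF le_rfl |>.trans_eq (max_eq_left h)).antisymm (le_supR hF p)

theorem le_subR_of_le (hF : Antitone F) (h : H p ≤ F p) : H p ≤ subR H F p :=
  (min_eq_right h).symm.trans_le (min_le_subR hF le_rfl)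

theorem supR_le_of_le (hF : Antitone F) (h : F p ≤ H p) : supR H F p ≤ H p :=
  (supR_le_max hF le_rfl).trans_eq (max_eq_right h)

theorem continuous_subR (hH : Continuous H) (hF : Continuous F) (hFa : Antitone F) :
    Continuous (subR H F) :=
  continuous_sSup_image_Ici (hF.min hH) (bddAbove_subR_image hFa)

theorem continuous_supR (hH : Continuous H) (hF : Continuous F) (hFa : Antitone F) :
    Continuous (supR H F) :=
  continuous_sInf_image_Iic (hF.max hH) (bddBelow_supR_image hFa)

theorem relax_of_le (h : H p ≤ F p) : relax H F p = subR H F p := if_pos h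

theorem relax_of_lt (h : F p < H p) : relax H F p = supR H F p := if_neg h.not_ge

theorem supR_le_subR (hH : Continuous H) (hF : Continuous F) (hFa : Antitone F) (hpq : p ≤ q)
    (hp : H p ≤ F p) (hq : F q ≤ H q) : supR H F q ≤ subR H F p := by
  obtain ⟨r, ⟨hpr, hrq⟩, hr⟩ : ∃ r ∈ Icc p q, F r - H r = 0 :=
    intermediate_value_Icc' hpq (hF.sub hH).continuousOn ⟨sub_nonpos.2 hq, sub_nonneg.2 hp⟩
  calc supR H F q ≤ max (F r) (H r) := supR_le_max hFa hrq
    _ = min (F r) (H r) := by rw [sub_eq_zero.1 hr, max_self, min_self]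
    _ ≤ subR H F p := min_le_subR hFa hpr

theorem relax_eq_supR_subR (hH : Continuous H) (hF : Continuous F) (hFa : Antitone F) :
    relax H F = supR H (subR H F) := by
  funext p
  rcases le_or_gt (H p) (F p) with hp | hp
  · rw [relax_of_le hp, supR_eq_self (subR_antitone hFa) (le_subR_of_le hFa hp)]
  · rw [relax_of_lt hp]
    refine le_antisymm (le_supR_of_forall fun q hq => ?_)
      (supR_mono (subR_antitone hFa) (subR_le hFa) p)
    rcases le_or_gt (H q) (F q) with hq' | hq'
    · exact (supR_le_subR hH hF hFa hq hq' hp.le).trans (le_max_left _ _)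
    · exact (supR_le_max hFa hq).trans ((max_eq_right hq'.le).trans_le (le_max_right _ _))

theorem relax_eq_subR_supR (hH : Continuous H) (hF : Continuous F) (hFa : Antitone F) :
    relax H F = subR H (supR H F) := by
  funext p
  rcases le_or_gt (H p) (F p) with hp | hp
  · rw [relax_of_le hp]
    refine le_antisymm (subR_mono (supR_antitone hFa) (le_supR hFa) p)
      (subR_le_of_forall fun q hq => ?_)
    rcases le_or_gt (F q) (H q) with hq' | hq'
    · exact (min_le_left _ _).trans (supR_le_subR hH hF hFa hq hp hq')
    · exact ((min_le_right _ _).trans_eq (min_eq_right hq'.le).symm).trans (min_le_subR hFa hq)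
  · rw [relax_of_lt hp, subR_eq_self (supR_antitone hFa) (supR_le_of_le hFa hp.le)]

theorem Coercive.tendsto_atBot (hH : Coercive H) : Tendsto H atBot atTop :=
  hH.mono_left (cocompact_eq_atBot_atTop (α := ℝ) ▸ le_sup_left)

theorem semiCoercive_relax (hF : Antitone F) (hH : Tendsto H atBot atTop) :
    SemiCoercive (relax H F) := by
  refine tendsto_atTop.2 fun b => ?_
  obtain ⟨N, hN⟩ := eventually_atBot.1 (tendsto_atTop.1 hH b)
  filter_upwards [eventually_le_atBot N] with p hpN
  rcases le_or_gt (H p) (F p) with hp | hp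
  · rw [relax_of_le hp]
    exact (hN p hpN).trans (le_subR_of_le hF hp)
  · rw [relax_of_lt hp]
    exact le_supR_of_forall fun q hq => (hN q (hq.trans hpN)).trans (le_max_right _ _)

end Relaxation

theorem relax_well_defined_and_compositions_general (H F0 : ℝ → ℝ)
    (hH : Continuous H) (hHc : Coercive H)
    (hF : Continuous F0) (hFa : Antitone F0) :
    (∀ p : ℝ, F0 p = H p → subR H F0 p = F0 p ∧ supR H F0 p = F0 p) ∧
    Continuous (relax H F0) ∧ Antitone (relax H F0) ∧ SemiCoercive (relax H F0) ∧
    relax H F0 = supR H (subR H F0) ∧ relax H F0 = subR H (supR H F0) := by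
  have hsup_sub := relax_eq_supR_subR hH hF hFa
  refine ⟨fun p hp => ⟨subR_eq_self hFa hp.le, supR_eq_self hFa hp.ge⟩, ?_, ?_,
    semiCoercive_relax hFa hHc.tendsto_atBot, hsup_sub, relax_eq_subR_supR hH hF hFa⟩
  · rw [hsup_sub]
    exact continuous_supR hH (continuous_subR hH hF hFa) (subR_antitone hFa)
  · rw [hsup_sub]
    exact supR_antitone (subR_antitone hFa)

/-- The relaxation operator is well-defined, continuous, non-increasing, semi-coercive,
and equals both compositions of the semi-relaxations. -/
theorem relax_well_defined_and_compositions (H F0 : ℝ → ℝ)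
    (hH : Continuous H) (hHc : Coercive H)
    (hF : Continuous F0) (hFa : Antitone F0) (hFs : SemiCoercive F0) :
    (∀ p : ℝ, F0 p = H p → subR H F0 p = F0 p ∧ supR H F0 p = F0 p) ∧
    Continuous (relax H F0) ∧ Antitone (relax H F0) ∧ SemiCoercive (relax H F0) ∧
    relax H F0 = supR H (subR H F0) ∧ relax H F0 = subR H (supR H F0) :=
  relax_well_defined_and_compositions_general H F0 hH hHc hF hFa
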